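/- Let P be a cd-structure on a category 𝒳. Then P is c-complete if and only if for every distinguished square of P with feet i : A → X and p : Y → X and every morphism f : X' → X in 𝒳, the pullback sieve f*⟨i,p⟩ on X' contains a simple P-cover. -/

import Mathlib

open CategoryTheory Limits Opposite

universe w v u

namespace CdFormal

variable {C : Type u} [Category.{v} C] {D : Type w} [Category.{v} D]

/-- A commutative square in `C`: `B → Y`, `B → A`, `p : Y → X`, `i : A → X`. -/
structure CDSquare (C : Type u) [Category.{v} C] where
  B : C
  A : C
  Y : C
  X : C
  e : B ⟶ A
  q : B ⟶ Y
  i : A ⟶ X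
  p : Y ⟶ X
  w : q ≫ p = e ≫ i

/-- The sieve on `X` generated by the feet `{i, p}` of a square. -/
def CDSquare.sieve (Q : CDSquare C) : Sieve Q.X where
  arrows Z g := (∃ h : Z ⟶ Q.A, g = h ≫ Q.i) ∨ (∃ h : Z ⟶ Q.Y, g = h ≫ Q.p)
  downward_closed := by
    rintro Z Z' g (⟨h, rfl⟩ | ⟨h, rfl⟩) g'
    · exact Or.inl ⟨g' ≫ h, by simp⟩
    · exact Or.inr ⟨g' ≫ h, by simp⟩

/-- The c-topology associated to a cd-structure `P`: the coarsest Grothendieck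
topology for which the sieve generated by the feet of each distinguished square is covering. -/
def cTopology (P : Set (CDSquare C)) : GrothendieckTopology C :=
  sInf {J | ∀ Q ∈ P, Q.sieve ∈ J Q.X}

/-- The class of simple `P`-covers. -/
inductive IsSimpleCover (P : Set (CDSquare C)) : (X : C) → Presieve X → Prop
  | iso {X' X : C} (f : X' ⟶ X) (hf : IsIso f) : IsSimpleCover P X (Presieve.singleton f)
  | glue (Q : CDSquare C) (hQ : Q ∈ P) (RY : Presieve Q.Y) (RA : Presieve Q.A)
      (hY : IsSimpleCover P Q.Y RY) (hA : IsSimpleCover P Q.A RA) :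
      IsSimpleCover P Q.X (fun Z g =>
        (∃ h : Z ⟶ Q.Y, RY h ∧ g = h ≫ Q.p) ∨ (∃ h : Z ⟶ Q.A, RA h ∧ g = h ≫ Q.i))

/-- `P` is c-complete: every covering sieve for the associated c-topology contains a
simple `P`-cover. -/
def IsCComplete (P : Set (CDSquare C)) : Prop :=
  ∀ ⦃X : C⦄ (S : Sieve X), S ∈ cTopology P X →
    ∃ R : Presieve X, IsSimpleCover P X R ∧ ∀ ⦃Z⦄ (g : Z ⟶ X), R g → S g

/-- `ρ(X)`: the sheafification of the presheaf represented by `X`. -/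
noncomputable def rho (J : GrothendieckTopology C) (X : C) : Sheaf J (Type (max u v)) :=
  (presheafToSheaf J _).obj (yoneda.obj X ⋙ uliftFunctor.{u})

/-- Functoriality of `ρ`. -/
noncomputable def rhoMap (J : GrothendieckTopology C) {X Y : C} (f : X ⟶ Y) :
    rho J X ⟶ rho J Y :=
  (presheafToSheaf J _).map (Functor.whiskerRight (yoneda.map f) uliftFunctor.{u})

lemma rhoMap_comp (J : GrothendieckTopology C) {X Y Z : C} (f : X ⟶ Y) (g : Y ⟶ Z) :
    rhoMap J (f ≫ g) = rhoMap J f ≫ rhoMap J g := by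
  rw [rhoMap, rhoMap, rhoMap, yoneda.map_comp, Functor.whiskerRight_comp, Functor.map_comp]
  rfl

instance instHasBinaryCoproductsSheafType (J : GrothendieckTopology C) :
    HasColimitsOfShape (Discrete WalkingPair) (Sheaf J (Type (max u v))) :=
  @Sheaf.instHasColimitsOfShape C _ J (Type (max u v)) _ (Discrete WalkingPair) _
    inferInstance inferInstance

/-- The canonical comparison morphism
`ρ(Y) ⊔ (ρ(B) ×_{ρ(A)} ρ(B)) ⟶ ρ(Y) ×_{ρ(X)} ρ(Y)` associated to a square. -/
noncomputable def regCompare (J : GrothendieckTopology C) (Q : CDSquare C) :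
    (rho J Q.Y) ⨿ (pullback (rhoMap J Q.e) (rhoMap J Q.e)) ⟶
      pullback (rhoMap J Q.p) (rhoMap J Q.p) :=
  coprod.desc (pullback.lift (𝟙 _) (𝟙 _) rfl)
    (pullback.lift (pullback.fst _ _ ≫ rhoMap J Q.q) (pullback.snd _ _ ≫ rhoMap J Q.q)
      (by
        rw [Category.assoc, Category.assoc, ← rhoMap_comp, Q.w, rhoMap_comp,
          ← Category.assoc, ← Category.assoc, pullback.condition]))

/-- `P` is c-regular. -/
def IsCRegular (P : Set (CDSquare C)) : Prop :=
  ∀ Q ∈ P, IsPullback Q.q Q.e Q.p Q.i ∧ Mono Q.i ∧ Epi (regCompare (cTopology P) Q)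

/-- The image of a square under a functor. -/
@[simps]
def CDSquare.map (F : C ⥤ D) (Q : CDSquare C) : CDSquare D where
  B := F.obj Q.B
  A := F.obj Q.A
  Y := F.obj Q.Y
  X := F.obj Q.X
  e := F.map Q.e
  q := F.map Q.q
  i := F.map Q.i
  p := F.map Q.p
  w := by rw [← F.map_comp, ← F.map_comp, Q.w]

/-- The induced cd-structure on a slice category. -/
def sliceCd (P : Set (CDSquare C)) (X : C) : Set (CDSquare (Over X)) :=
  {Q | Q.map (Over.forget X) ∈ P}

/-- A dimension function on a category: an initial object `empty` together with a
dimension taking the minimal value `bot` exactly on objects isomorphic to `empty`. -/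
structure DimensionFunction (C : Type u) [Category.{v} C] (Λ : Type w) [Preorder Λ] where
  empty : C
  init : Nonempty (IsInitial empty)
  dim : C → Λ
  bot : Λ
  bot_le : ∀ X : C, bot ≤ dim X
  dim_eq_bot_iff : ∀ X : C, dim X = bot ↔ Nonempty (X ≅ empty)

/-- A cd-structure is compatible with a dimension function. -/
def CompatibleWithDim {Λ : Type w} [Preorder Λ] (P : Set (CDSquare C))
    (Dm : DimensionFunction C Λ) : Prop :=
  ∃ P' : Set (CDSquare C), P' ⊆ P ∧
    (∀ Q ∈ P', Dm.dim Q.A ≤ Dm.dim Q.X ∧ Dm.dim Q.Y ≤ Dm.dim Q.X ∧ Dm.dim Q.B < Dm.dim Q.X) ∧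
    ∀ Q ∈ P, ∃ R : Presieve Q.X, IsSimpleCover P' Q.X R ∧
      ∀ ⦃Z⦄ (g : Z ⟶ Q.X), R g → Q.sieve g

end CdFormal

/-!
Sieves that contain a simple cover after every base change form a Grothendieck topology: if the
members of a simple cover are each refined by simple covers, induction on the simple cover glues
these refinements into a single simple cover. The hypothesis says exactly that this topology
contains every `⟨i,p⟩`, so it is finer than the c-topology; conversely, c-completeness applied to
the covering sieves `f*⟨i,p⟩` gives the hypothesis.
-/

namespace CdFormal

section

variable {C : Type u} [Category.{v} C] (P : Set (CDSquare C))

def ContainsSimpleCover {X : C} (S : Sieve X) : Prop :=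
  ∃ R : Presieve X, IsSimpleCover P X R ∧ ∀ ⦃Z⦄ (g : Z ⟶ X), R g → S g

def UniversallyContainsSimpleCover {X : C} (S : Sieve X) : Prop :=
  ∀ ⦃X' : C⦄ (f : X' ⟶ X), ContainsSimpleCover P (S.pullback f)

variable {P}

lemma UniversallyContainsSimpleCover.pullback {X Y : C} {S : Sieve X}
    (hS : UniversallyContainsSimpleCover P S) (f : Y ⟶ X) :
    UniversallyContainsSimpleCover P (S.pullback f) := by
  intro X' g
  rw [← Sieve.pullback_comp]
  exact hS (g ≫ f)

lemma UniversallyContainsSimpleCover.containsSimpleCover {X : C} {S : Sieve X}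
    (hS : UniversallyContainsSimpleCover P S) : ContainsSimpleCover P S := by
  simpa only [Sieve.pullback_id] using hS (𝟙 X)

lemma IsSimpleCover.containsSimpleCover_of_universally {X : C} {R : Presieve X}
    (hR : IsSimpleCover P X R) (T : Sieve X)
    (hT : ∀ ⦃Z⦄ (g : Z ⟶ X), R g → UniversallyContainsSimpleCover P (T.pullback g)) :
    ContainsSimpleCover P T := by
  induction hR with
  | iso f _ =>
    simpa only [← Sieve.pullback_comp, IsIso.inv_hom_id, Sieve.pullback_id] using
      hT f Presieve.singleton.mk (inv f)
  | glue Q hQ RY RA _ _ ihY ihA =>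
    obtain ⟨RY', hY', hRY'⟩ := ihY (T.pullback Q.p) fun Z g hg => by
      simpa only [← Sieve.pullback_comp] using hT (g ≫ Q.p) (Or.inl ⟨g, hg, rfl⟩)
    obtain ⟨RA', hA', hRA'⟩ := ihA (T.pullback Q.i) fun Z g hg => by
      simpa only [← Sieve.pullback_comp] using hT (g ≫ Q.i) (Or.inr ⟨g, hg, rfl⟩)
    refine ⟨_, .glue Q hQ RY' RA' hY' hA', ?_⟩
    rintro Z g (⟨h, hh, rfl⟩ | ⟨h, hh, rfl⟩)
    · exact hRY' h hh
    · exact hRA' h hh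

variable (P) in
def simpleCoverTopology : GrothendieckTopology C where
  sieves X := {S | UniversallyContainsSimpleCover P S}
  top_mem' X X' f :=
    ⟨Presieve.singleton (𝟙 X'), .iso _ inferInstance, fun _ _ _ => trivial⟩
  pullback_stable' X Y S f hS := hS.pullback f
  transitive' X S hS T hT X' f := by
    obtain ⟨R, hR, hRS⟩ := hS f
    refine hR.containsSimpleCover_of_universally (T.pullback f) fun Z g hg => ?_
    rw [← Sieve.pullback_comp]
    exact hT (hRS g hg)

lemma cTopology_le_iff {J : GrothendieckTopology C} :
    cTopology P ≤ J ↔ ∀ Q ∈ P, Q.sieve ∈ J Q.X := by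
  refine ⟨fun hJ Q hQ => hJ Q.X ?_, fun hJ => sInf_le hJ⟩
  rw [cTopology, GrothendieckTopology.mem_sInf]
  exact fun J hJ => hJ Q hQ

lemma isCComplete_iff_cTopology_le_simpleCoverTopology :
    IsCComplete P ↔ cTopology P ≤ simpleCoverTopology P := by
  refine ⟨fun hP X S hS X' f => hP _ ((cTopology P).pullback_stable f hS), ?_⟩
  exact fun hle X S hS => UniversallyContainsSimpleCover.containsSimpleCover (hle X hS)

end

/-- A cd-structure `P` is c-complete if and only if for every distinguished square of `P`
with feet `i : A → X` and `p : Y → X` and every morphism `f : X' → X`, the pullback sieve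
`f*⟨i,p⟩` on `X'` contains a simple `P`-cover. -/
theorem isCComplete_iff_pullback_contains_simple_cover
    {C : Type u} [Category.{v} C] (P : Set (CDSquare C)) :
    IsCComplete P ↔
      ∀ Q ∈ P, ∀ {X' : C} (f : X' ⟶ Q.X),
        ∃ R : Presieve X', IsSimpleCover P X' R ∧
          ∀ ⦃Z⦄ (g : Z ⟶ X'), R g → (Q.sieve.pullback f) g := by
  rw [isCComplete_iff_cTopology_le_simpleCoverTopology, cTopology_le_iff]
  rfl

end CdFormal
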